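/- (Singular values under SVD-based decomposition) Let A = U_A S V_Aᵀ ∈ ℝ^{n×n} be an SVD and A_k = U_A S_k V_Aᵀ with (S_k)_{mm} = λ_m(A) if m = k and 0 otherwise. For arbitrary W_k ∈ ℝ^{d×d}, the singular values of Σ_{k=1}^n W_k ⊗ A_k are exactly λ_k(A)·λ_j(W_k) for k = 1,...,n and j = 1,...,d. -/

import Mathlib

/-!
Since `A_k = U D_k Vᵀ` with `D_k` the `k`-th diagonal unit scaled by `σ k`, the sum
`∑ W_k ⊗ A_k` factors as `(1 ⊗ U) · blockDiagonal (σ_k W_k) · (1 ⊗ V)ᵀ`. Taking spectral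
decompositions `W_kᵀ W_k = Q_k diag(λ_j(W_k)²) Q_kᵀ`, its Gram matrix is conjugate by the
orthogonal matrix `(1 ⊗ V) · blockDiagonal Q` to the diagonal matrix of the
`(σ_k λ_j(W_k))²`. Conjugate matrices share their characteristic polynomial, whose roots are
the eigenvalues of the Gram matrix, so these agree with the `(σ_k λ_j(W_k))²` up to order.
-/

open Matrix
open scoped Kronecker

/-- Singular values of a real square matrix: square roots of the eigenvalues of `Mᵀ M`. -/
noncomputable def singularValues {m : Type*} [Fintype m] [DecidableEq m]
    (M : Matrix m m ℝ) : m → ℝ :=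
  fun i => Real.sqrt ((show (Mᵀ * M).IsHermitian by
    rw [← Matrix.conjTranspose_eq_transpose_of_trivial]
    exact Matrix.isHermitian_conjTranspose_mul_self M).eigenvalues i)

/-- The `k`-th rank-one SVD component `A_k = U S_k Vᵀ`, where `S_k` keeps only the `k`-th
singular value of `S = diag σ`. -/
noncomputable def svdPart {n : ℕ} (U V : Matrix (Fin n) (Fin n) ℝ) (σ : Fin n → ℝ)
    (k : Fin n) : Matrix (Fin n) (Fin n) ℝ :=
  U * Matrix.diagonal (fun m => if m = k then σ k else 0) * Vᵀ

open Polynomial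

theorem exists_equiv_comp_eq_of_map_univ_val_eq {α β : Type*} [Fintype α] [DecidableEq β]
    {f g : α → β} (h : Multiset.map f Finset.univ.val = Multiset.map g Finset.univ.val) :
    ∃ e : α ≃ α, ∀ a, f (e a) = g a := by
  have hcard : ∀ c, Fintype.card {a // g a = c} = Fintype.card {a // f a = c} := fun c => by
    have := congrArg (Multiset.count c) h
    simp only [Multiset.count_map] at this
    simp only [Fintype.card_subtype, Finset.card, Finset.filter_val]
    simpa [eq_comm] using this.symm
  exact ⟨Equiv.ofFiberEquiv fun c => Fintype.equivOfCardEq (hcard c),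
    Equiv.ofFiberEquiv_map _⟩

namespace Matrix

section Spectrum

variable {m : Type*} [Fintype m]

theorem isHermitian_transpose_mul_self (M : Matrix m m ℝ) : (Mᵀ * M).IsHermitian := by
  simpa only [conjTranspose_eq_transpose_of_trivial] using isHermitian_conjTranspose_mul_self M

variable [DecidableEq m]

theorem charpoly_mul_mul_of_mul_eq_one {R : Type*} [CommRing R] {P Q : Matrix m m R}
    (h : Q * P = 1) (A : Matrix m m R) : (P * A * Q).charpoly = A.charpoly := by
  rw [Matrix.mul_assoc, charpoly_mul_comm, Matrix.mul_assoc, h, Matrix.mul_one]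

theorem IsHermitian.exists_equiv_eigenvalues_eq {𝕜 : Type*} [RCLike 𝕜] {A : Matrix m m 𝕜}
    (hA : A.IsHermitian) {f : m → ℝ} (h : A.charpoly = ∏ i, (X - C (f i : 𝕜))) :
    ∃ e : m ≃ m, ∀ i, hA.eigenvalues (e i) = f i := by
  have hroots : Multiset.map (RCLike.ofReal ∘ hA.eigenvalues) Finset.univ.val =
      Multiset.map ((RCLike.ofReal : ℝ → 𝕜) ∘ f) Finset.univ.val := by
    rw [← hA.roots_charpoly_eq_eigenvalues, h,
      roots_prod _ _ (by simp [Finset.prod_ne_zero_iff, X_sub_C_ne_zero])]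
    simp
  obtain ⟨e, he⟩ := exists_equiv_comp_eq_of_map_univ_val_eq hroots
  exact ⟨e, fun i => RCLike.ofReal_injective (he i)⟩

theorem singularValues_apply (M : Matrix m m ℝ) (i : m) :
    singularValues M i = √((isHermitian_transpose_mul_self M).eigenvalues i) := rfl

theorem singularValues_nonneg (M : Matrix m m ℝ) (i : m) : 0 ≤ singularValues M i :=
  Real.sqrt_nonneg _

theorem exists_transpose_mul_self_eq_singularValues (M : Matrix m m ℝ) :
    ∃ Q : Matrix m m ℝ, Qᵀ * Q = 1 ∧
      Mᵀ * M = Q * diagonal (fun i => singularValues M i ^ 2) * Qᵀ := by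
  have hH := isHermitian_transpose_mul_self M
  have hsq : ∀ i, singularValues M i ^ 2 = hH.eigenvalues i := fun i =>
    Real.sq_sqrt ((posSemidef_conjTranspose_mul_self M).eigenvalues_nonneg i)
  refine ⟨hH.eigenvectorUnitary, ?_, ?_⟩
  · simpa [star_eq_conjTranspose] using (Unitary.mem_iff.mp hH.eigenvectorUnitary.2).1
  · simp only [hsq]
    simpa [star_eq_conjTranspose] using hH.spectral_theorem

theorem exists_equiv_singularValues_eq {M P : Matrix m m ℝ} (hP : Pᵀ * P = 1) {g : m → ℝ}
    (hg : ∀ i, 0 ≤ g i) (hM : Mᵀ * M = P * diagonal (fun i => g i ^ 2) * Pᵀ) :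
    ∃ e : m ≃ m, ∀ i, singularValues M (e i) = g i := by
  have hchar : (Mᵀ * M).charpoly = ∏ i, (X - C (RCLike.ofReal (g i ^ 2) : ℝ)) := by
    rw [hM, charpoly_mul_mul_of_mul_eq_one hP, charpoly_diagonal]
    rfl
  obtain ⟨e, he⟩ := (isHermitian_transpose_mul_self M).exists_equiv_eigenvalues_eq hchar
  exact ⟨e, fun i => by rw [singularValues_apply, he, Real.sqrt_sq (hg i)]⟩

end Spectrum

section Orthogonal

variable {m o R : Type*} [Fintype m] [DecidableEq m] [Fintype o] [DecidableEq o]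

theorem transpose_mul_self_one_kronecker [CommSemiring R] {U : Matrix o o R} (hU : Uᵀ * U = 1) :
    ((1 : Matrix m m R) ⊗ₖ U)ᵀ * ((1 : Matrix m m R) ⊗ₖ U) = 1 := by
  rw [← kroneckerMap_transpose, transpose_one, ← mul_kronecker_mul, Matrix.one_mul, hU,
    one_kronecker_one]

theorem transpose_mul_self_mul_mul_transpose {l n p : Type*} [Fintype l] [Fintype n]
    [CommSemiring R] {X : Matrix l m R} (hX : Xᵀ * X = 1) (N : Matrix m n R) (Y : Matrix p n R) :
    (X * N * Yᵀ)ᵀ * (X * N * Yᵀ) = Y * (Nᵀ * N) * Yᵀ := by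
  simp only [transpose_mul, transpose_transpose, Matrix.mul_assoc]
  rw [← Matrix.mul_assoc Xᵀ, hX, Matrix.one_mul]

variable [Semiring R]

theorem transpose_mul_self_blockDiagonal {B Q : o → Matrix m m R} {g : o → m → R}
    (h : ∀ k, (B k)ᵀ * B k = Q k * diagonal (g k) * (Q k)ᵀ) :
    (blockDiagonal B)ᵀ * blockDiagonal B =
      blockDiagonal Q * diagonal (fun p => g p.2 p.1) * (blockDiagonal Q)ᵀ := by
  simp only [blockDiagonal_transpose, ← blockDiagonal_diagonal, ← blockDiagonal_mul, h]

theorem transpose_mul_self_blockDiagonal_eq_one {Q : o → Matrix m m R}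
    (hQ : ∀ k, (Q k)ᵀ * Q k = 1) : (blockDiagonal Q)ᵀ * blockDiagonal Q = 1 := by
  simp only [blockDiagonal_transpose, ← blockDiagonal_mul, hQ]
  exact blockDiagonal_one

end Orthogonal

end Matrix

theorem sum_kronecker_svdPart_eq {n d : ℕ} (U V : Matrix (Fin n) (Fin n) ℝ) (σ : Fin n → ℝ)
    (W : Fin n → Matrix (Fin d) (Fin d) ℝ) :
    ∑ k, W k ⊗ₖ svdPart U V σ k =
      (1 ⊗ₖ U) * blockDiagonal (fun k => σ k • W k) * (1 ⊗ₖ V)ᵀ := by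
  have hblock : blockDiagonal (fun k => σ k • W k) =
      ∑ k, W k ⊗ₖ diagonal (fun m => if m = k then σ k else 0) := by
    ext ⟨i, s⟩ ⟨j, t⟩
    by_cases hst : s = t
    · subst hst; simp [blockDiagonal_apply, Matrix.sum_apply, mul_comm]
    · simp [blockDiagonal_apply, Matrix.sum_apply, hst]
  rw [hblock, Finset.mul_sum, Finset.sum_mul]
  refine Finset.sum_congr rfl fun k _ => ?_
  rw [← kroneckerMap_transpose, transpose_one, ← mul_kronecker_mul, ← mul_kronecker_mul,
    Matrix.one_mul, Matrix.mul_one, svdPart]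

/-- (Singular values under the SVD-based decomposition) For `A = U (diag σ) Vᵀ` an SVD and
`A_k = U S_k Vᵀ`, the singular values of `Σ_k W_k ⊗ A_k` are exactly the products
`λ_k(A) · λ_j(W_k)`, counted with multiplicity. -/
theorem singularValues_sum_kronecker_svdPart {n d : ℕ}
    (U V : Matrix (Fin n) (Fin n) ℝ)
    (hU : Uᵀ * U = 1 ∧ U * Uᵀ = 1) (hV : Vᵀ * V = 1 ∧ V * Vᵀ = 1)
    (σ : Fin n → ℝ) (hσ : ∀ k, 0 ≤ σ k)
    (W : Fin n → Matrix (Fin d) (Fin d) ℝ) :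
    ∃ e : (Fin d × Fin n) ≃ (Fin d × Fin n),
      ∀ p : Fin d × Fin n,
        singularValues (∑ k, (W k) ⊗ₖ svdPart U V σ k) (e p) =
          σ p.2 * singularValues (W p.2) p.1 := by
  choose Q hQ hWQ using fun k => exists_transpose_mul_self_eq_singularValues (W k)
  have hblock : ∀ k, (σ k • W k)ᵀ * (σ k • W k) =
      Q k * diagonal (fun j => (σ k * singularValues (W k) j) ^ 2) * (Q k)ᵀ := fun k => by
    have hdiag : (fun j => (σ k * singularValues (W k) j) ^ 2) =
        σ k ^ 2 • fun j => singularValues (W k) j ^ 2 := funext fun j => mul_pow _ _ _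
    rw [transpose_smul, smul_mul_smul_comm, hWQ k, ← pow_two, hdiag, diagonal_smul,
      Matrix.mul_smul, Matrix.smul_mul]
  refine exists_equiv_singularValues_eq
    (P := ((1 : Matrix (Fin d) (Fin d) ℝ) ⊗ₖ V) * blockDiagonal Q) ?_
    (fun p => mul_nonneg (hσ p.2) (singularValues_nonneg _ _)) ?_
  · rw [transpose_mul, Matrix.mul_assoc, ← Matrix.mul_assoc (1 ⊗ₖ V)ᵀ,
      transpose_mul_self_one_kronecker hV.1, Matrix.one_mul,
      transpose_mul_self_blockDiagonal_eq_one hQ]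
  · rw [sum_kronecker_svdPart_eq, transpose_mul_self_mul_mul_transpose
      (transpose_mul_self_one_kronecker hU.1), transpose_mul_self_blockDiagonal hblock]
    simp only [transpose_mul, Matrix.mul_assoc]
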